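/- arXiv:2409.00389 — 5 statements merged into one kernel-verified Lean document; each statement's English description precedes it below -/
import Mathlib

section
/- Let D be a class of small categories. Then D is weakly sound if and only if every small D-cocomplete category is D-filtered. -/
open CategoryTheory CategoryTheory.Limits Opposite

universe w v u

namespace Paper

/-- The `M`-weighted colimit functor, sending `F : C ⥤ Type` to the conical colimit of
`F ∘ π` over the (opposite of the Mathlib) category of elements of `M`. -/
noncomputable def weightedColimF {C : Type u} [Category.{0} C] (M : Cᵒᵖ ⥤ Type)
    (h : HasColimitsOfShape (M.Elements)ᵒᵖ (Type 0)) : (C ⥤ Type) ⥤ Type :=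
  letI := h
  (Functor.whiskeringLeft (M.Elements)ᵒᵖ C (Type 0)).obj (CategoryOfElements.π M).leftOp ⋙ colim

/-- A weight `M : Cᵒᵖ ⥤ Type` is `D`-flat if `M`-weighted colimits commute in `Type`
with limits of shape `J` for every `J ∈ D`. -/
def DFlat (D : Set Cat.{0,0}) {C : Type u} [Category.{0} C] (M : Cᵒᵖ ⥤ Type) : Prop :=
  ∃ h : HasColimitsOfShape (M.Elements)ᵒᵖ (Type 0),
    ∀ J : Cat.{0,0}, J ∈ D → Nonempty (PreservesLimitsOfShape ↥J (weightedColimF M h))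

/-- A category is `D`-cocomplete if it has colimits of shape `J` for every `J ∈ D`. -/
def DCocomplete (D : Set Cat.{0,0}) (C : Type u) [Category.{0} C] : Prop :=
  ∀ J : Cat.{0,0}, J ∈ D → HasColimitsOfShape ↥J C

/-- A category is `D`-complete if it has limits of shape `J` for every `J ∈ D`. -/
def DComplete (D : Set Cat.{0,0}) (C : Type u) [Category.{0} C] : Prop :=
  ∀ J : Cat.{0,0}, J ∈ D → HasLimitsOfShape ↥J C

/-- A small category `C` is `D`-filtered if the colimit functor `(C ⥤ Type) ⥤ Type`
preserves limits of shape `J` for every `J ∈ D`. -/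
def DFiltered (D : Set Cat.{0,0}) (C : Type) [SmallCategory C] : Prop :=
  ∀ J : Cat.{0,0}, J ∈ D →
    Nonempty (PreservesLimitsOfShape ↥J (colim : (C ⥤ Type) ⥤ Type))

/-- `M : Cᵒᵖ ⥤ Type` sends colimits of `D`-shaped diagrams in `C` to limits in `Type`;
equivalently, it preserves limits of shape `Jᵒᵖ` for every `J ∈ D`. -/
def DContinuous (D : Set Cat.{0,0}) {C : Type u} [Category.{0} C] (M : Cᵒᵖ ⥤ Type) : Prop :=
  ∀ J : Cat.{0,0}, J ∈ D → Nonempty (PreservesLimitsOfShape (↥J)ᵒᵖ M)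

/-- `D` is weakly sound if every presheaf on a small `D`-cocomplete category sending
`D`-shaped colimits to limits is `D`-flat. -/
def WeaklySound (D : Set Cat.{0,0}) : Prop :=
  ∀ (C : Type) [SmallCategory C], DCocomplete D C →
    ∀ M : Cᵒᵖ ⥤ Type, DContinuous D M → DFlat D M

/-- An object `X` is `D`-presentable if `Hom(X, -)` preserves colimits of all
`D`-filtered shapes. -/
def DPresentable (D : Set Cat.{0,0}) {K : Type u} [Category.{0} K] (X : K) : Prop :=
  ∀ (C : Type) [SmallCategory C], DFiltered D C →
    Nonempty (PreservesColimitsOfShape C (coyoneda.obj (op X)))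

/-- The restricted Yoneda functor `K ⥤ (Gᵒᵖ ⥤ Type)` associated to a set of objects `G`. -/
noncomputable def restrictedYoneda {K : Type u} [Category.{0} K] (G : Set K) :
    K ⥤ ((ObjectProperty.FullSubcategory fun X : K => X ∈ G)ᵒᵖ ⥤ Type) :=
  yoneda ⋙ (Functor.whiskeringLeft _ _ _).obj (ObjectProperty.ι fun X : K => X ∈ G).op

/-- `G` is a strong generator: the restricted Yoneda functor is conservative. -/
def IsStrongGenerator {K : Type u} [Category.{0} K] (G : Set K) : Prop :=
  (restrictedYoneda G).ReflectsIsomorphisms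

/-- `K` is locally `D`-presentable: cocomplete with a small strong generator consisting
of `D`-presentable objects. -/
def LocallyDPresentable (D : Set Cat.{0,0}) (K : Type u) [Category.{0} K] : Prop :=
  HasColimits K ∧
    ∃ G : Set K, Small.{0} (↥G) ∧ (∀ X ∈ G, DPresentable D X) ∧ IsStrongGenerator G

/-- `K` is `D`-accessible: it has colimits of all `D`-filtered shapes and a small family of
`D`-presentable objects such that every object is a `D`-filtered colimit of objects there. -/
def DAccessible (D : Set Cat.{0,0}) (K : Type u) [Category.{0} K] : Prop :=
  (∀ (C : Type) [SmallCategory C], DFiltered D C → HasColimitsOfShape C K) ∧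
  ∃ S : Set K, Small.{0} (↥S) ∧ (∀ X ∈ S, DPresentable D X) ∧
    ∀ X : K, ∃ C : Cat.{0,0}, DFiltered D ↥C ∧
      ∃ H : ↥C ⥤ K, (∀ c : ↥C, H.obj c ∈ S) ∧
        ∃ cc : Cocone H, Nonempty (IsColimit cc) ∧ Nonempty (cc.pt ≅ X)

/-- The closure of a set of objects under colimits of `D`-shaped diagrams
(the smallest replete collection containing `S` and closed under such colimits). -/
inductive DShapeClos (D : Set Cat.{0,0}) {A : Type u} [Category.{0} A] (S : Set A) : A → Prop
  | of {X : A} : X ∈ S → DShapeClos D S X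
  | iso {X Y : A} (e : X ≅ Y) : DShapeClos D S X → DShapeClos D S Y
  | colim (J : Cat.{0,0}) (hJ : J ∈ D) (H : ↥J ⥤ A)
      (hH : ∀ j : ↥J, DShapeClos D S (H.obj j)) (c : Cocone H) (hc : IsColimit c) :
      DShapeClos D S c.pt

end Paper

/-!
For `⇒`, apply weak soundness to the terminal presheaf on `C`: its category of elements is `C`
itself, so flatness of it is filteredness of `C`. For `⇐`, a `D`-continuous presheaf `M` on a
`D`-cocomplete `C` has `D`-cocomplete `El(M)ᵒᵖ`, and `M`-weighted colimits are
plain colimits over `El(M)ᵒᵖ`.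
-/

namespace Paper

section Elements

variable {C : Type u} [Category.{0} C]

lemma preservesLimitsOfShape_const_punit (J : Type) [SmallCategory J] :
    PreservesLimitsOfShape J ((Functor.const C).obj PUnit) where
  preservesLimit := ⟨fun _ => ⟨{
    lift := fun _ => TypeCat.ofHom fun _ => PUnit.unit
    fac := fun _ _ => rfl
    uniq := fun _ _ _ => rfl }⟩⟩

lemma dContinuous_const_punit (D : Set Cat.{0,0}) :
    DContinuous D ((Functor.const Cᵒᵖ).obj PUnit) :=
  fun _ _ => ⟨preservesLimitsOfShape_const_punit _⟩

instance isEquivalence_leftOp_π_const_punit :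
    (CategoryOfElements.π ((Functor.const Cᵒᵖ).obj PUnit)).leftOp.IsEquivalence where
  faithful := ⟨fun h => Quiver.Hom.unop_inj (CategoryOfElements.ext _ _ _ (Quiver.Hom.unop_inj h))⟩
  full := ⟨fun {X Y} g => ⟨(CategoryOfElements.homMk Y.unop X.unop g.op rfl).op, rfl⟩⟩
  essSurj := ⟨fun X => ⟨op ⟨op X, PUnit.unit⟩, ⟨Iso.refl _⟩⟩⟩

-- `π` creates the limits that `M` preserves, and `J`-colimits in `C` are `Jᵒᵖ`-limits in `Cᵒᵖ`.
lemma hasColimitsOfShape_elements_op (J : Type) [SmallCategory J] [HasColimitsOfShape J C]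
    (M : Cᵒᵖ ⥤ Type) [PreservesLimitsOfShape Jᵒᵖ M] :
    HasColimitsOfShape J M.Elementsᵒᵖ := by
  have : HasColimitsOfShape Jᵒᵖᵒᵖ C :=
    hasColimitsOfShape_of_equivalence (opOpEquivalence J).symm
  have : HasLimitsOfShape Jᵒᵖ Cᵒᵖ := hasLimitsOfShape_op_of_hasColimitsOfShape
  exact hasColimitsOfShape_op_of_hasLimitsOfShape

lemma dCocomplete_elements_op {D : Set Cat.{0,0}} (hC : DCocomplete D C) {M : Cᵒᵖ ⥤ Type}
    (hM : DContinuous D M) : DCocomplete D M.Elementsᵒᵖ := fun J hJ =>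
  haveI := hC J hJ
  haveI := (hM J hJ).some
  hasColimitsOfShape_elements_op J M

end Elements

section Small

variable {D : Set Cat.{0,0}} {C : Type} [SmallCategory C]

-- `π` is an equivalence, hence final.
noncomputable def weightedColimFConstPUnitIso
    (h : HasColimitsOfShape ((Functor.const Cᵒᵖ).obj PUnit).Elementsᵒᵖ Type) :
    weightedColimF ((Functor.const Cᵒᵖ).obj PUnit) h ≅ colim :=
  Functor.Final.colimIso _

lemma dFiltered_of_dFlat_const_punit (h : DFlat D ((Functor.const Cᵒᵖ).obj PUnit)) :
    DFiltered D C := by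
  obtain ⟨hcolim, hflat⟩ := h
  intro J hJ
  have := (hflat J hJ).some
  exact ⟨preservesLimitsOfShape_of_natIso (weightedColimFConstPUnitIso hcolim)⟩

lemma dFlat_of_dFiltered_elements_op {M : Cᵒᵖ ⥤ Type} (h : DFiltered D M.Elementsᵒᵖ) :
    DFlat D M :=
  ⟨inferInstance, fun J hJ => haveI := (h J hJ).some; ⟨comp_preservesLimitsOfShape _ colim⟩⟩

end Small

/-- A class `D` of small categories is weakly sound if and only if
every small `D`-cocomplete category is `D`-filtered. -/
theorem weaklySound_iff_dCocomplete_dFiltered (D : Set Cat.{0,0}) :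
    WeaklySound D ↔
      ∀ (C : Type) [SmallCategory C], DCocomplete D C → DFiltered D C := by
  constructor
  · intro ws C _ hC
    exact dFiltered_of_dFlat_const_punit (ws C hC _ (dContinuous_const_punit D))
  · intro hfilt C _ hC M hM
    exact dFlat_of_dFiltered_elements_op (hfilt _ (dCocomplete_elements_op hC hM))

end Paper
end

section
/- Let D be a weakly sound class of small categories. If K is locally D-presentable, L is cocomplete, and F : L → K is a conservative functor that admits a left adjoint and preserves colimits of all D-filtered shapes, then L is locally D-presentable. -/
open CategoryTheory CategoryTheory.Limits Opposite

universe w v u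

/-! The left adjoint `E ⊣ F` carries a strong generator of `D`-presentable objects of `K` to one
of `L`: `Hom(E X, -) ≅ Hom(X, F -)` is `D`-presentable because `F` preserves `D`-filtered
colimits, and the image generates strongly because `F` is conservative. -/

namespace Paper

section

variable {K : Type u} [Category.{0} K]

lemma isIso_restrictedYoneda_map_iff (G : Set K) {A B : K} (f : A ⟶ B) :
    IsIso ((restrictedYoneda G).map f) ↔
      ∀ X ∈ G, Function.Bijective fun g : X ⟶ A => g ≫ f := by
  rw [NatTrans.isIso_iff_isIso_app]
  constructor
  · intro h X hX
    exact (isIso_iff_bijective _).mp (h (op ⟨X, hX⟩))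
  · rintro h ⟨X, hX⟩
    exact (isIso_iff_bijective _).mpr (h X hX)

variable {L : Type v} [Category.{0} L] {E : K ⥤ L} {F : L ⥤ K}

lemma _root_.CategoryTheory.Adjunction.bijective_comp_map_iff (adj : E ⊣ F) (X : K) {A B : L}
    (f : A ⟶ B) :
    (Function.Bijective fun g : X ⟶ F.obj A => g ≫ F.map f) ↔
      Function.Bijective fun g : E.obj X ⟶ A => g ≫ f := by
  have conj : (fun g : X ⟶ F.obj A => g ≫ F.map f) =
      adj.homEquiv X B ∘ (fun g : E.obj X ⟶ A => g ≫ f) ∘ (adj.homEquiv X A).symm := by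
    funext g
    simp [Adjunction.homEquiv_naturality_right]
  rw [conj, Equiv.comp_bijective, Equiv.bijective_comp]

lemma DPresentable.leftAdjoint_obj {D : Set Cat.{0,0}} (adj : E ⊣ F)
    (hF : ∀ (C : Type) [SmallCategory C], DFiltered D C →
      Nonempty (PreservesColimitsOfShape C F))
    {X : K} (hX : DPresentable D X) : DPresentable D (E.obj X) := by
  intro C _ hC
  obtain ⟨_⟩ := hF C hC
  obtain ⟨_⟩ := hX C hC
  exact ⟨preservesColimitsOfShape_of_natIso (F := F ⋙ coyoneda.obj (op X))
    (adj.compCoyonedaIso.app (op X)).symm⟩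

lemma IsStrongGenerator.image_leftAdjoint (adj : E ⊣ F) [F.ReflectsIsomorphisms] {G : Set K}
    (hG : IsStrongGenerator G) : IsStrongGenerator (E.obj '' G) := by
  refine ⟨fun {A B} f hf => ?_⟩
  have hFf : IsIso ((restrictedYoneda G).map (F.map f)) := by
    rw [isIso_restrictedYoneda_map_iff] at hf ⊢
    intro X hX
    exact (adj.bijective_comp_map_iff X f).mpr (hf _ ⟨X, hX, rfl⟩)
  have : IsIso (F.map f) := hG.reflects _
  exact isIso_of_reflects_iso f F

end

theorem locallyDPresentable_of_conservative_rightAdjoint_general (D : Set Cat.{0,0})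
    (K : Type u) [Category.{0} K] (L : Type v) [Category.{0} L]
    (hK : LocallyDPresentable D K) (hL : HasColimits L)
    (F : L ⥤ K) (hcons : F.ReflectsIsomorphisms)
    (hadj : ∃ Ladj : K ⥤ L, Nonempty (Ladj ⊣ F))
    (hpres : ∀ (C : Type) [SmallCategory C], DFiltered D C →
      Nonempty (PreservesColimitsOfShape C F)) :
    LocallyDPresentable D L := by
  obtain ⟨E, ⟨adj⟩⟩ := hadj
  obtain ⟨-, G, hGsmall, hGpres, hGgen⟩ := hK
  refine ⟨hL, E.obj '' G, inferInstance, ?_, hGgen.image_leftAdjoint adj⟩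
  rintro _ ⟨X, hX, rfl⟩
  exact (hGpres X hX).leftAdjoint_obj adj hpres

/-- If `D` is weakly sound, `K` is locally `D`-presentable, `L` is
cocomplete, and `F : L ⥤ K` is conservative, admits a left adjoint, and preserves colimits
of all `D`-filtered shapes, then `L` is locally `D`-presentable. -/
theorem locallyDPresentable_of_conservative_rightAdjoint (D : Set Cat.{0,0})
    (hD : WeaklySound D) (K : Type u) [Category.{0} K] (L : Type v) [Category.{0} L]
    (hK : LocallyDPresentable D K) (hL : HasColimits L)
    (F : L ⥤ K) (hcons : F.ReflectsIsomorphisms)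
    (hadj : ∃ Ladj : K ⥤ L, Nonempty (Ladj ⊣ F))
    (hpres : ∀ (C : Type) [SmallCategory C], DFiltered D C →
      Nonempty (PreservesColimitsOfShape C F)) :
    LocallyDPresentable D L :=
  locallyDPresentable_of_conservative_rightAdjoint_general D K L hK hL F hcons hadj hpres

end Paper
end

section
/- Let D be a weakly sound class of small categories, K a D-accessible category that is complete, and A a D-accessible category. Then the following are equivalent for a functor F : K → A: (1) F preserves all small limits and all colimits of D-filtered shapes; (2) F preserves colimits of all D-filtered shapes and admits a left adjoint; (3) F admits a left adjoint which sends D-presentable objects of A to D-presentable objects of K. -/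
open CategoryTheory CategoryTheory.Limits Opposite

universe w v u

/-!
(3) ⇒ (1): a right adjoint preserves limits, and for a `D`-presentable `s` the functor
`Hom(s, F -) ≅ Hom(L s, -)` preserves `D`-filtered colimits; since every object of `A` is a
colimit of presentables, the presentables detect isomorphisms, so the comparison map
`colim (F ∘ H) ⟶ F (colim H)` is invertible.

(1) ⇒ (2): for `s` presentable, every `s ⟶ F Z` factors through `F` of one of the small family
of presentables generating `K`, because `Z` is a `D`-filtered colimit of them and `Hom(s, F -)`
preserves it. This solution set gives `s ↓ F` an initial object, i.e. the left adjoint is defined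
at `s`; the objects at which a partial left adjoint is defined are closed under colimits, and
every object of `A` is a colimit of presentables.

(2) ⇒ (3): `Hom(L X, -) ≅ Hom(X, F -)` is a composite of functors preserving `D`-filtered
colimits.
-/

namespace CategoryTheory

lemma ObjectProperty.isDetecting_of_forall_isColimit {C : Type u} [Category.{v} C]
    (P : ObjectProperty C)
    (hP : ∀ Y : C, ∃ (J : Type w) (_ : SmallCategory J) (H : J ⥤ C)
      (ι : H ⟶ (Functor.const J).obj Y),
        (∀ j, P (H.obj j)) ∧ Nonempty (IsColimit (Cocone.mk Y ι))) :
    P.IsDetecting := by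
  intro X Y f hf
  have cancel_f : ∀ {G : C}, P G → ∀ {g₁ g₂ : G ⟶ X}, g₁ ≫ f = g₂ ≫ f → g₁ = g₂ :=
    fun hG _ _ h => (hf _ hG _).unique h rfl
  obtain ⟨J, _, H, ι, hH, ⟨hY⟩⟩ := hP Y
  choose g hg using fun j => (hf _ (hH j) (ι.app j)).exists
  let q : Y ⟶ X := hY.desc (Cocone.mk X
    { app := g
      naturality := fun j j' m => cancel_f (hH j) (by simp [hg]) })
  have hq : q ≫ f = 𝟙 Y := hY.hom_ext fun j => by
    rw [Category.comp_id, hY.fac_assoc]; exact hg j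
  obtain ⟨J', _, H', ι', hH', ⟨hX⟩⟩ := hP X
  exact ⟨q, hX.hom_ext fun j => cancel_f (hH' j) (by simp [hq]), hq⟩

lemma ObjectProperty.IsDetecting.isIso_of_isIso_coyoneda_map {C : Type u} [Category.{v} C]
    {P : ObjectProperty C} (hP : P.IsDetecting) {X Y : C} (f : X ⟶ Y)
    (hf : ∀ G, P G → IsIso ((coyoneda.obj (op G)).map f)) : IsIso f :=
  hP f fun G hG => ((isIso_iff_bijective _).1 (hf G hG)).existsUnique

lemma Functor.leftAdjointObjIsDefined_of_isInitial {C : Type u} [Category.{v} C]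
    {D : Type w} [Category.{v} D] {F : D ⥤ C} {X : C} {T : StructuredArrow X F}
    (hT : IsInitial T) : F.leftAdjointObjIsDefined X :=
  Functor.CorepresentableBy.isCorepresentable (F := F ⋙ coyoneda.obj (op X)) (X := T.right)
    { homEquiv :=
        { toFun := fun g => T.hom ≫ F.map g
          invFun := fun f => (hT.to (StructuredArrow.mk f)).right
          left_inv := fun g => congrArg CommaMorphism.right
            (hT.hom_ext (hT.to (StructuredArrow.mk (T.hom ≫ F.map g))) (StructuredArrow.homMk g))
          right_inv := fun f => StructuredArrow.w (hT.to (StructuredArrow.mk f)) }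
      homEquiv_comp := fun g f => by simp }

lemma hasInitial_structuredArrow_of_solutionSet {C : Type u} [Category.{v} C]
    {D : Type w} [Category.{v} D] [HasLimits D] (G : D ⥤ C) [PreservesLimits G] (X : C)
    (hX : ∃ (ι : Type v) (B : ι → D) (f : ∀ i, X ⟶ G.obj (B i)),
      ∀ (Y : D) (h : X ⟶ G.obj Y), ∃ (i : ι) (g : B i ⟶ Y), f i ≫ G.map g = h) :
    HasInitial (StructuredArrow X G) := by
  obtain ⟨ι, B, f, hf⟩ := hX
  have hweak : ∀ Y : StructuredArrow X G, ∃ i, Nonempty (StructuredArrow.mk (f i) ⟶ Y) :=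
    fun Y =>
      let ⟨i, g, hg⟩ := hf Y.right Y.hom
      ⟨i, ⟨StructuredArrow.homMk g hg⟩⟩
  obtain ⟨T, hT⟩ := has_weakly_initial_of_weakly_initial_set_and_hasProducts hweak
  exact hasInitial_of_weakly_initial_and_hasWideEqualizers hT

end CategoryTheory

namespace Paper

-- `DPresentable D X` unfolds to `PreservesDFilteredColimits D (coyoneda.obj (op X))`.
def PreservesDFilteredColimits (D : Set Cat.{0,0}) {K : Type*} [Category* K] {A : Type*}
    [Category* A] (F : K ⥤ A) : Prop :=
  ∀ (C : Type) [SmallCategory C], DFiltered D C → Nonempty (PreservesColimitsOfShape C F)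

section

variable {D : Set Cat.{0,0}} {K : Type*} [Category* K] {A : Type*} [Category* A]

lemma PreservesDFilteredColimits.comp {E : Type*} [Category* E] {F : K ⥤ A} {G : A ⥤ E}
    (hF : PreservesDFilteredColimits D F) (hG : PreservesDFilteredColimits D G) :
    PreservesDFilteredColimits D (F ⋙ G) := fun C _ hC =>
  have := (hF C hC).some
  have := (hG C hC).some
  ⟨inferInstance⟩

lemma PreservesDFilteredColimits.of_iso {F G : K ⥤ A} (e : F ≅ G)
    (hF : PreservesDFilteredColimits D F) : PreservesDFilteredColimits D G := fun C _ hC =>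
  have := (hF C hC).some
  ⟨preservesColimitsOfShape_of_natIso e⟩

end

variable {D : Set Cat.{0,0}} {K : Type u} [Category.{0} K] {A : Type v} [Category.{0} A]

lemma DAccessible.exists_isColimit (hK : DAccessible D K) :
    ∃ S : Set K, Small.{0} S ∧ (∀ X ∈ S, DPresentable D X) ∧
      ∀ X : K, ∃ C : Cat.{0,0}, DFiltered D C ∧
        ∃ (H : C ⥤ K) (ι : H ⟶ (Functor.const C).obj X),
          (∀ c, H.obj c ∈ S) ∧ Nonempty (IsColimit (Cocone.mk X ι)) := by
  obtain ⟨-, S, hS, hSpres, hcover⟩ := hK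
  refine ⟨S, hS, hSpres, fun X => ?_⟩
  obtain ⟨C, hC, H, hH, c, ⟨hc⟩, ⟨e⟩⟩ := hcover X
  exact ⟨C, hC, H, (c.extend e.hom).ι, hH, ⟨hc.ofIsoColimit (Cocone.extendIso c e)⟩⟩

lemma DPresentable.leftAdjoint_obj_s5 {L : A ⥤ K} {F : K ⥤ A} (adj : L ⊣ F)
    (hF : PreservesDFilteredColimits D F) {X : A} (hX : DPresentable D X) :
    DPresentable D (L.obj X) :=
  (hF.comp hX).of_iso (adj.corepresentableBy X).toIso.symm

lemma preservesDFilteredColimits_of_leftAdjoint (hA : DAccessible D A) {L : A ⥤ K} {F : K ⥤ A}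
    (adj : L ⊣ F) (hL : ∀ X : A, DPresentable D X → DPresentable D (L.obj X)) :
    PreservesDFilteredColimits D F := by
  intro C _ hC
  obtain ⟨S, -, hSpres, hS⟩ := hA.exists_isColimit
  have hSdet : ObjectProperty.IsDetecting (fun X => X ∈ S) :=
    ObjectProperty.isDetecting_of_forall_isColimit _ fun X =>
      let ⟨C', _, H, ι, hH, hX⟩ := hS X
      ⟨C', inferInstance, H, ι, hH, hX⟩
  have := hA.1 C hC
  refine ⟨⟨fun {H} => ⟨fun {c} hc => ?_⟩⟩⟩
  have : HasColimit H := ⟨⟨⟨c, hc⟩⟩⟩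
  suffices IsIso (colimit.post H F) from
    have : PreservesColimit H F := preservesColimit_of_isIso_post (F := H) (G := F)
    ⟨isColimitOfPreserves F hc⟩
  refine hSdet.isIso_of_isIso_coyoneda_map _ fun s hs => ?_
  have := (hSpres s hs C hC).some
  have := (PreservesDFilteredColimits.of_iso (adj.corepresentableBy s).toIso
    (hL s (hSpres s hs)) C hC).some
  have : IsIso (colimit.post (H ⋙ F) (coyoneda.obj (op s)) ≫
      (coyoneda.obj (op s)).map (colimit.post H F)) := by
    rw [colimit.post_post]; infer_instance
  exact IsIso.of_isIso_comp_left (colimit.post (H ⋙ F) (coyoneda.obj (op s))) _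

lemma exists_solutionSet_of_dPresentable (hK : DAccessible D K) {F : K ⥤ A}
    (hF : PreservesDFilteredColimits D F) {s : A} (hs : DPresentable D s) :
    ∃ (ι : Type) (B : ι → K) (f : ∀ i, s ⟶ F.obj (B i)),
      ∀ (Z : K) (h : s ⟶ F.obj Z), ∃ (i : ι) (g : B i ⟶ Z), f i ≫ F.map g = h := by
  obtain ⟨S, hSsmall, -, hS⟩ := hK.exists_isColimit
  let e := equivShrink (Σ b : S, s ⟶ F.obj b)
  refine ⟨Shrink (Σ b : S, s ⟶ F.obj b), fun i => (e.symm i).1, fun i => (e.symm i).2,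
    fun Z h => ?_⟩
  obtain ⟨C, hC, H, ι, hH, ⟨hZ⟩⟩ := hS Z
  have := (hF C hC).some
  have := (hs C hC).some
  obtain ⟨c, g, hg⟩ := Types.jointly_surjective _
    (isColimitOfPreserves (F ⋙ coyoneda.obj (op s)) hZ) h
  obtain ⟨i, hi⟩ := e.symm.surjective ⟨⟨H.obj c, hH c⟩, g⟩
  refine ⟨i, ?_⟩
  dsimp only
  rw [hi]
  exact ⟨ι.app c, by simpa using hg⟩

lemma isRightAdjoint_of_preservesLimits_of_preservesDFilteredColimits (hK : DAccessible D K)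
    (hA : DAccessible D A) [HasLimits K] (F : K ⥤ A) [PreservesLimits F]
    (hF : PreservesDFilteredColimits D F) : F.IsRightAdjoint := by
  obtain ⟨S, -, hSpres, hS⟩ := hA.exists_isColimit
  refine Functor.isRightAdjoint_of_leftAdjointObjIsDefined_eq_top (eq_top_iff.2 fun X _ => ?_)
  obtain ⟨C, hC, H, ι, hH, ⟨hX⟩⟩ := hS X
  have := hK.1 C hC
  refine Functor.leftAdjointObjIsDefined_of_isColimit hX fun c => ?_
  have := hasInitial_structuredArrow_of_solutionSet F (H.obj c)
    (exists_solutionSet_of_dPresentable hK hF (hSpres _ (hH c)))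
  exact Functor.leftAdjointObjIsDefined_of_isInitial initialIsInitial

theorem adjoint_characterization_general (D : Set Cat.{0,0})
    (K : Type u) [Category.{0} K] (A : Type v) [Category.{0} A]
    (hK : DAccessible D K) (hKcomplete : HasLimits K) (hA : DAccessible D A)
    (F : K ⥤ A) :
    List.TFAE [
      Nonempty (PreservesLimitsOfSize.{0,0} F) ∧
        ∀ (C : Type) [SmallCategory C], DFiltered D C →
          Nonempty (PreservesColimitsOfShape C F),
      (∀ (C : Type) [SmallCategory C], DFiltered D C →
          Nonempty (PreservesColimitsOfShape C F)) ∧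
        ∃ L : A ⥤ K, Nonempty (L ⊣ F),
      ∃ L : A ⥤ K, Nonempty (L ⊣ F) ∧
        ∀ X : A, DPresentable D X → DPresentable D (L.obj X)] := by
  tfae_have 1 → 2
  | ⟨⟨hFlim⟩, hFcolim⟩ =>
    have := isRightAdjoint_of_preservesLimits_of_preservesDFilteredColimits hK hA F hFcolim
    ⟨hFcolim, F.leftAdjoint, ⟨Adjunction.ofIsRightAdjoint F⟩⟩
  tfae_have 2 → 3
  | ⟨hF, L, ⟨adj⟩⟩ => ⟨L, ⟨adj⟩, fun _ => DPresentable.leftAdjoint_obj_s5 adj hF⟩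
  tfae_have 3 → 1
  | ⟨L, ⟨adj⟩, hL⟩ =>
    ⟨⟨adj.rightAdjoint_preservesLimits⟩, preservesDFilteredColimits_of_leftAdjoint hA adj hL⟩
  tfae_finish

/-- Let `D` be weakly sound, `K` a `D`-accessible complete category and
`A` a `D`-accessible category.  For a functor `F : K ⥤ A` the following are equivalent:
(1) `F` preserves all small limits and all colimits of `D`-filtered shapes;
(2) `F` preserves colimits of all `D`-filtered shapes and admits a left adjoint;
(3) `F` admits a left adjoint sending `D`-presentable objects to `D`-presentable objects. -/
theorem adjoint_characterization (D : Set Cat.{0,0}) (hD : WeaklySound D)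
    (K : Type u) [Category.{0} K] (A : Type v) [Category.{0} A]
    (hK : DAccessible D K) (hKcomplete : HasLimits K) (hA : DAccessible D A)
    (F : K ⥤ A) :
    List.TFAE [
      Nonempty (PreservesLimitsOfSize.{0,0} F) ∧
        ∀ (C : Type) [SmallCategory C], DFiltered D C →
          Nonempty (PreservesColimitsOfShape C F),
      (∀ (C : Type) [SmallCategory C], DFiltered D C →
          Nonempty (PreservesColimitsOfShape C F)) ∧
        ∃ L : A ⥤ K, Nonempty (L ⊣ F),
      ∃ L : A ⥤ K, Nonempty (L ⊣ F) ∧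
        ∀ X : A, DPresentable D X → DPresentable D (L.obj X)] :=
  adjoint_characterization_general D K A hK hKcomplete hA F

end Paper
end

section
/- Let Φ ⊆ Ψ ⊆ Ξ be sound classes of weights over Type. If Φ ⊴ Ψ and Ψ ⊴ Ξ then Φ ⊴ Ξ, where Φ ⊴ Ψ denotes the sharply-less condition: every Φ-accessible category is Ψ-accessible, and for every functor F : A → B between Φ-accessible categories that preserves all colimits weighted by Φ-flat weights, if F maps A_Φ into B_Φ then F maps A_Ψ into B_Ψ (and correspondingly for the other pairs). -/
open CategoryTheory CategoryTheory.Limits Opposite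

universe w v u

namespace PaperW

/-- A class of weights over `Type`: an isomorphism-closed collection of presheaves on each
small category. -/
structure WeightClass where
  mem : ∀ B : Cat.{0,0}, ((↥B)ᵒᵖ ⥤ Type) → Prop
  isoClosed : ∀ (B : Cat.{0,0}) (M N : (↥B)ᵒᵖ ⥤ Type), (M ≅ N) → mem B M → mem B N

/-- The `M`-weighted colimit functor, sending `F : C ⥤ Type` to the conical colimit of
`F ∘ π` over the category of elements of `M`. -/
noncomputable def wcolimF {C : Type u} [Category.{0} C] (M : Cᵒᵖ ⥤ Type)
    (h : HasColimitsOfShape (M.Elements)ᵒᵖ (Type 0)) : (C ⥤ Type) ⥤ Type :=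
  letI := h
  (Functor.whiskeringLeft (M.Elements)ᵒᵖ C (Type 0)).obj (CategoryOfElements.π M).leftOp ⋙ colim

/-- A weight `M : Cᵒᵖ ⥤ Type` is `Φ`-flat: the `M`-weighted colimit functor preserves
`W`-weighted limits for every weight `W` in `Φ`. -/
def FlatW (Φ : WeightClass) {C : Type u} [Category.{0} C] (M : Cᵒᵖ ⥤ Type) : Prop :=
  ∃ h : HasColimitsOfShape (M.Elements)ᵒᵖ (Type 0),
    ∀ (B : Cat.{0,0}) (W : (↥B)ᵒᵖ ⥤ Type), Φ.mem B W →
      ∀ G : (↥B)ᵒᵖ ⥤ (C ⥤ Type),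
        Nonempty (PreservesLimit (CategoryOfElements.π W ⋙ G) (wcolimF M h))

/-- The closure of a set of objects `S` of `A` under colimits weighted by weights
belonging to the class `W` (the smallest replete such collection). -/
inductive WClos (W : ∀ B : Cat.{0,0}, ((↥B)ᵒᵖ ⥤ Type) → Prop)
    {A : Type u} [Category.{0} A] (S : Set A) : A → Prop
  | of {X : A} : X ∈ S → WClos W S X
  | iso {X Y : A} (e : X ≅ Y) : WClos W S X → WClos W S Y
  | wcolim (B : Cat.{0,0}) (M : (↥B)ᵒᵖ ⥤ Type) (hM : W B M)
      (H : ↥B ⥤ A) (hH : ∀ b : ↥B, WClos W S (H.obj b))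
      (c : Cocone ((CategoryOfElements.π M).leftOp ⋙ H)) (hc : IsColimit c) :
      WClos W S c.pt

/-- The representable presheaves on a small category. -/
def reps (C : Cat.{0,0}) : Set ((↥C)ᵒᵖ ⥤ Type) :=
  Set.range (yoneda (C := ↥C)).obj

/-- `ΦC`, the free `Φ`-cocompletion of `C`: the `Φ`-closure of the representables. -/
def freeCocompl (Φ : WeightClass) (C : Cat.{0,0}) : Set ((↥C)ᵒᵖ ⥤ Type) :=
  {M | WClos Φ.mem (reps C) M}

/-- `Φ` is saturated: membership in `Φ(C)` coincides with membership in `ΦC`. -/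
def Saturated (Φ : WeightClass) : Prop :=
  ∀ (C : Cat.{0,0}) (M : (↥C)ᵒᵖ ⥤ Type), Φ.mem C M ↔ M ∈ freeCocompl Φ C

/-- `Φ` is locally small: `ΦC` is essentially small for every small `C`. -/
def LocallySmallW (Φ : WeightClass) : Prop :=
  ∀ C : Cat.{0,0},
    EssentiallySmall.{0} (ObjectProperty.FullSubcategory fun M : (↥C)ᵒᵖ ⥤ Type => M ∈ freeCocompl Φ C)

/-- A category admits all `Φ`-weighted colimits. -/
def WCocomplete (Φ : WeightClass) (C : Type u) [Category.{0} C] : Prop :=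
  ∀ (B : Cat.{0,0}) (W : (↥B)ᵒᵖ ⥤ Type), Φ.mem B W →
    ∀ H : ↥B ⥤ C, HasColimit ((CategoryOfElements.π W).leftOp ⋙ H)

/-- `M : Cᵒᵖ ⥤ Type` sends `Φ`-weighted colimits in `C` to weighted limits in `Type`. -/
def WContinuous (Φ : WeightClass) {C : Type u} [Category.{0} C] (M : Cᵒᵖ ⥤ Type) : Prop :=
  ∀ (B : Cat.{0,0}) (W : (↥B)ᵒᵖ ⥤ Type), Φ.mem B W →
    ∀ H : ↥B ⥤ C,
      Nonempty (PreservesLimit ((CategoryOfElements.π W).leftOp ⋙ H).op M)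

/-- The weak-soundness condition for a class of weights. -/
def WeaklySoundW (Φ : WeightClass) : Prop :=
  ∀ C : Cat.{0,0}, WCocomplete Φ ↥C →
    ∀ M : (↥C)ᵒᵖ ⥤ Type, WContinuous Φ M → FlatW Φ M

/-- `Φ` is sound: saturated, locally small, and weakly sound. -/
def SoundW (Φ : WeightClass) : Prop :=
  Saturated Φ ∧ LocallySmallW Φ ∧ WeaklySoundW Φ

/-- An object `X` is `Φ`-presentable: `Hom(X, -)` preserves all existing colimits weighted
by `Φ`-flat weights. -/
def WPresentable (Φ : WeightClass) {A : Type u} [Category.{0} A] (X : A) : Prop :=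
  ∀ (B : Cat.{0,0}) (M : (↥B)ᵒᵖ ⥤ Type), FlatW Φ M → ∀ H : ↥B ⥤ A,
    Nonempty (PreservesColimit ((CategoryOfElements.π M).leftOp ⋙ H)
      (coyoneda.obj (op X)))

/-- `A` is `Φ`-accessible: it admits all colimits weighted by `Φ`-flat weights and has a
small family of `Φ`-presentable objects generating it under `Φ`-flat weighted colimits. -/
def WAccessible (Φ : WeightClass) (A : Type u) [Category.{0} A] : Prop :=
  (∀ (B : Cat.{0,0}) (M : (↥B)ᵒᵖ ⥤ Type), FlatW Φ M → ∀ H : ↥B ⥤ A,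
    HasColimit ((CategoryOfElements.π M).leftOp ⋙ H)) ∧
  ∃ S : Set A, Small.{0} (↥S) ∧ (∀ X ∈ S, WPresentable Φ X) ∧
    ∀ X : A, ∃ (B : Cat.{0,0}) (M : (↥B)ᵒᵖ ⥤ Type) (H : ↥B ⥤ A),
      FlatW Φ M ∧ (∀ b : ↥B, H.obj b ∈ S) ∧
      ∃ c : Cocone ((CategoryOfElements.π M).leftOp ⋙ H),
        Nonempty (IsColimit c) ∧ Nonempty (c.pt ≅ X)

/-- The class `Φ⁺` of `Φ`-flat weights. -/
def flatClass (Φ : WeightClass) : ∀ B : Cat.{0,0}, ((↥B)ᵒᵖ ⥤ Type) → Prop :=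
  fun _ M => FlatW Φ M

/-- The class `Φ⁺ ∩ Ψ` of weights which are `Φ`-flat and lie in `Ψ`. -/
def flatInter (Φ Ψ : WeightClass) : ∀ B : Cat.{0,0}, ((↥B)ᵒᵖ ⥤ Type) → Prop :=
  fun B M => FlatW Φ M ∧ Ψ.mem B M

/-- Containment of classes of weights. -/
def Sub (Φ Ψ : WeightClass) : Prop :=
  ∀ (B : Cat.{0,0}) (M : (↥B)ᵒᵖ ⥤ Type), Φ.mem B M → Ψ.mem B M

/-- `F` preserves all colimits weighted by `Φ`-flat weights. -/
def PreservesFlatColimits (Φ : WeightClass) {A : Type u} {A' : Type v}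
    [Category.{0} A] [Category.{0} A'] (F : A ⥤ A') : Prop :=
  ∀ (B : Cat.{0,0}) (M : (↥B)ᵒᵖ ⥤ Type), FlatW Φ M → ∀ H : ↥B ⥤ A,
    Nonempty (PreservesColimit ((CategoryOfElements.π M).leftOp ⋙ H) F)

/-- `Φ⁺C ∩ ΨC`: presheaves lying in both `Φ⁺C` and `ΨC`. -/
def interSub (Φ Ψ : WeightClass) (C : Cat.{0,0}) : Set ((↥C)ᵒᵖ ⥤ Type) :=
  {M | WClos (flatClass Φ) (reps C) M ∧ WClos Ψ.mem (reps C) M}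

lemma yoneda_mem_interSub (Φ Ψ : WeightClass) (C : Cat.{0,0}) (c : ↥C) :
    yoneda.obj c ∈ interSub Φ Ψ C :=
  ⟨WClos.of ⟨c, rfl⟩, WClos.of ⟨c, rfl⟩⟩

/-- The corestricted Yoneda embedding `C ⥤ Φ⁺C ∩ ΨC`. -/
noncomputable def corestrictedYoneda (Φ Ψ : WeightClass) (C : Cat.{0,0}) :
    ↥C ⥤ ObjectProperty.FullSubcategory fun M : (↥C)ᵒᵖ ⥤ Type => M ∈ interSub Φ Ψ C :=
  ObjectProperty.lift _ yoneda (yoneda_mem_interSub Φ Ψ C)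

end PaperW

namespace PaperW

/-- `Φ` is sharply less than `Ψ` (condition (4) of the paper's theorem): every
`Φ`-accessible category is `Ψ`-accessible, and every functor between `Φ`-accessible
categories which preserves `Φ`-flat weighted colimits and `Φ`-presentable objects also
preserves `Ψ`-presentable objects. -/
def SharpLess (Φ Ψ : WeightClass) : Prop :=
  (∀ (A : Type 1) [Category.{0} A], WAccessible Φ A → WAccessible Ψ A) ∧
    (∀ (A A' : Type 1) [Category.{0} A] [Category.{0} A'] (F : A ⥤ A'),
      WAccessible Φ A → WAccessible Φ A' → PreservesFlatColimits Φ F →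
      (∀ X : A, WPresentable Φ X → WPresentable Φ (F.obj X)) →
      ∀ X : A, WPresentable Ψ X → WPresentable Ψ (F.obj X))

theorem FlatW.of_sub {Φ Ψ : WeightClass} (hΦΨ : Sub Φ Ψ) {C : Type u} [Category.{0} C]
    {M : Cᵒᵖ ⥤ Type} (hM : FlatW Ψ M) : FlatW Φ M :=
  let ⟨h, hf⟩ := hM
  ⟨h, fun B W hW => hf B W (hΦΨ B W hW)⟩

theorem PreservesFlatColimits.of_sub {Φ Ψ : WeightClass} (hΦΨ : Sub Φ Ψ) {A : Type u}
    {A' : Type v} [Category.{0} A] [Category.{0} A'] {F : A ⥤ A'}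
    (hF : PreservesFlatColimits Φ F) : PreservesFlatColimits Ψ F :=
  fun B M hM H => hF B M (hM.of_sub hΦΨ) H

theorem sharpLess_trans_general (Φ Ψ Ξ : WeightClass)
    (hΦΨ : Sub Φ Ψ)
    (h₁ : SharpLess Φ Ψ) (h₂ : SharpLess Ψ Ξ) :
    SharpLess Φ Ξ := by
  refine ⟨fun A _ hA => h₂.1 A (h₁.1 A hA), ?_⟩
  intro A A' _ _ F hA hA' hF hFΦ
  have hFΨ : ∀ X : A, WPresentable Ψ X → WPresentable Ψ (F.obj X) :=
    h₁.2 A A' F hA hA' hF hFΦ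
  exact h₂.2 A A' F (h₁.1 A hA) (h₁.1 A' hA') (hF.of_sub hΦΨ) hFΨ

/-- The sharply-less relation between sound classes of weights is
transitive. -/
theorem sharpLess_trans (Φ Ψ Ξ : WeightClass)
    (hΦ : SoundW Φ) (hΨ : SoundW Ψ) (hΞ : SoundW Ξ)
    (hΦΨ : Sub Φ Ψ) (hΨΞ : Sub Ψ Ξ)
    (h₁ : SharpLess Φ Ψ) (h₂ : SharpLess Ψ Ξ) :
    SharpLess Φ Ξ :=
  sharpLess_trans_general Φ Ψ Ξ hΦΨ h₁ h₂

end PaperW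
end

section
/- Let D be a weakly sound class of small categories. The following are equivalent for a category K: (1) K is equivalent to the Eilenberg–Moore category of algebras of a monad T on Type whose underlying endofunctor preserves colimits of all D-filtered shapes; (2) K is cocomplete and has an object G such that the single-object family {G} is a strong generator, G is D-presentable, and G is projective in the sense that Hom(G, −) : K → Type preserves coequalizers of Hom(G, −)-split pairs. Moreover, when these hold, K is locally D-presentable. -/
open CategoryTheory CategoryTheory.Limits Opposite

universe w v u

namespace Paper

/-- `K` is equivalent to the Eilenberg–Moore category of a monad on `Type` whose underlying
endofunctor preserves colimits of all `D`-filtered shapes. -/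
def IsDAryMonadic (D : Set Cat.{0,0}) (K : Type u) [Category.{0} K] : Prop :=
  ∃ T : Monad (Type 0),
    (∀ (C : Type) [SmallCategory C], DFiltered D C →
      Nonempty (PreservesColimitsOfShape C T.toFunctor)) ∧
    Nonempty (K ≌ T.Algebra)

/-- `K` is cocomplete with a single-object strong generator `G` which is `D`-presentable and
projective (`Hom(G, -)` preserves coequalizers of `Hom(G, -)`-split pairs). -/
def HasProjectiveDPresentableGenerator (D : Set Cat.{0,0}) (K : Type u)
    [Category.{0} K] : Prop :=
  HasColimits K ∧
    ∃ G : K, IsStrongGenerator {G} ∧ DPresentable D G ∧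
      ∀ (A B : K) (f g : A ⟶ B), (coyoneda.obj (op G)).IsSplitPair f g →
        Nonempty (PreservesColimit (parallelPair f g) (coyoneda.obj (op G)))

end Paper

/-!
If `K ≌ T.Algebra`, the free algebra `G` on one point corepresents the forgetful functor `U`, so
`Hom(G, -) ≅ U` reflects isomorphisms, preserves the colimits that `T` preserves (`U` creates
them), and preserves coequalizers of `U`-split pairs (`U` is monadic). `K` is cocomplete because
algebras over any monad on `Type` are: the colimit of a diagram of algebras is the image of the
free algebra on the disjoint union of their carriers in the product of all cocone vertices.

Conversely, `Hom(G, -)` has the left adjoint `X ↦ ∐_X G`, and Beck's theorem makes it monadic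
since it reflects isomorphisms and preserves coequalizers of its split pairs. The monad
`X ↦ Hom(G, ∐_X G)` preserves `D`-filtered colimits because `G` is `D`-presentable, and `{G}`
itself is a small strong generator of `D`-presentable objects.
-/

namespace CategoryTheory.Monad.Algebra

section SplitQuotient

variable {C : Type*} [Category C] {T : Monad C} (A : T.Algebra) {Q : C} {p : A.A ⟶ Q}
  {s : Q ⟶ A.A} (hsp : s ≫ p = 𝟙 Q) (hp : T.map (p ≫ s) ≫ A.a ≫ p = A.a ≫ p)

def ofSplitEpi : T.Algebra where
  A := Q
  a := T.map s ≫ A.a ≫ p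
  unit := by rw [← T.η.naturality_assoc, Functor.id_map, A.unit_assoc, hsp]
  assoc := by
    rw [← T.μ.naturality_assoc, A.assoc_assoc]
    simp only [Functor.comp_map, Functor.map_comp, Category.assoc]
    rw [← T.map_comp_assoc p s, hp]

def toOfSplitEpi : A ⟶ ofSplitEpi A hsp hp where
  f := p
  h := by
    change T.map p ≫ T.map s ≫ A.a ≫ p = A.a ≫ p
    rw [← T.map_comp_assoc, hp]

variable {A hsp hp}

def descOfSplitEpi {B : T.Algebra} (g : A ⟶ B) (hg : p ≫ s ≫ g.f = g.f) :
    ofSplitEpi A hsp hp ⟶ B where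
  f := s ≫ g.f
  h := by
    change T.map (s ≫ g.f) ≫ B.a = (T.map s ≫ A.a ≫ p) ≫ s ≫ g.f
    rw [Category.assoc, Category.assoc, hg, ← g.h, T.map_comp_assoc]

lemma toOfSplitEpi_descOfSplitEpi {B : T.Algebra} (g : A ⟶ B) (hg : p ≫ s ≫ g.f = g.f) :
    toOfSplitEpi A hsp hp ≫ descOfSplitEpi g hg = g :=
  Hom.ext hg

instance : Epi (toOfSplitEpi A hsp hp) :=
  have : IsSplitEpi p := .mk' ⟨s, hsp⟩
  algebra_epi_of_epi (h := inferInstanceAs (Epi p)) _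

end SplitQuotient

section Coimage

variable {T : Monad (Type u)} {A : T.Algebra} {ι : Type*} {B : ι → T.Algebra}
  (f : ∀ i, A ⟶ B i)

-- `ι` may be a large type; the quotient stays in `Type u` since the kernel relation is a `Prop`.
def jointKer : Setoid A.A := Setoid.ker fun x i => (f i).f x

lemma mk_jointKer_out_comp (i : ι) :
    ↾(_root_.Quotient.mk (jointKer f)) ≫ ↾_root_.Quotient.out ≫ (f i).f = (f i).f := by
  ext x
  exact congrFun (Setoid.ker_apply_mk_out (f := fun x i => (f i).f x) x) i

lemma out_comp_mk_jointKer :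
    ↾_root_.Quotient.out ≫ ↾(_root_.Quotient.mk (jointKer f)) = 𝟙 _ := by
  ext x
  exact _root_.Quotient.out_eq x

lemma jointKer_hom_ext {X : Type u} {u v : X ⟶ _root_.Quotient (jointKer f)}
    (h : ∀ i, u ≫ ↾_root_.Quotient.out ≫ (f i).f = v ≫ ↾_root_.Quotient.out ≫ (f i).f) :
    u = v := by
  ext x
  rw [← _root_.Quotient.out_equiv_out]
  exact Setoid.ker_def.2 (funext fun i => ConcreteCategory.congr_hom (h i) x)

lemma map_mk_jointKer_out_comp_a :
    T.map (↾(_root_.Quotient.mk (jointKer f)) ≫ ↾_root_.Quotient.out) ≫ A.a ≫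
      ↾(_root_.Quotient.mk (jointKer f)) = A.a ≫ ↾(_root_.Quotient.mk (jointKer f)) :=
  jointKer_hom_ext f fun i => by
    simp only [Category.assoc, mk_jointKer_out_comp, ← (f i).h, ← T.map_comp_assoc]

noncomputable def jointCoimage : T.Algebra :=
  ofSplitEpi A (out_comp_mk_jointKer f) (map_mk_jointKer_out_comp_a f)

noncomputable def toJointCoimage : A ⟶ jointCoimage f := toOfSplitEpi A _ _

noncomputable def jointCoimageLift (i : ι) : jointCoimage f ⟶ B i :=
  descOfSplitEpi (f i) (mk_jointKer_out_comp f i)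

lemma toJointCoimage_jointCoimageLift (i : ι) : toJointCoimage f ≫ jointCoimageLift f i = f i :=
  toOfSplitEpi_descOfSplitEpi _ _

instance : Epi (toJointCoimage f) := inferInstanceAs (Epi (toOfSplitEpi A _ _))

lemma jointCoimage_ext {X : Type u} {u v : X ⟶ (jointCoimage f).A}
    (h : ∀ i, u ≫ (jointCoimageLift f i).f = v ≫ (jointCoimageLift f i).f) : u = v :=
  jointKer_hom_ext f h

lemma jointCoimage_hom_ext {X : T.Algebra} {g g' : X ⟶ jointCoimage f}
    (h : ∀ i, g ≫ jointCoimageLift f i = g' ≫ jointCoimageLift f i) : g = g' :=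
  Hom.ext (jointCoimage_ext f fun i => congrArg Hom.f (h i))

end Coimage

section Colimits

variable {T : Monad (Type u)} {J : Type u} [SmallCategory J] (F : J ⥤ T.Algebra)

noncomputable def freeHomOfCocone (c : Cocone F) : T.free.obj (Σ j, (F.obj j).A) ⟶ c.pt :=
  (T.adj.homEquiv _ _).symm (↾fun x => (c.ι.app x.1).f x.2)

noncomputable def colimitLegMap (j : J) : (F.obj j).A ⟶ (jointCoimage (freeHomOfCocone F)).A :=
  ↾(Sigma.mk (β := fun j => (F.obj j).A) j) ≫
    T.adj.homEquiv _ _ (toJointCoimage (freeHomOfCocone F))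

lemma colimitLegMap_comp_jointCoimageLift (j : J) (c : Cocone F) :
    colimitLegMap F j ≫ (jointCoimageLift (freeHomOfCocone F) c).f = (c.ι.app j).f := by
  have h := T.adj.homEquiv_naturality_right (toJointCoimage (freeHomOfCocone F))
    (jointCoimageLift (freeHomOfCocone F) c)
  rw [toJointCoimage_jointCoimageLift, freeHomOfCocone, Equiv.apply_symm_apply] at h
  exact (congrArg (_ ≫ ·) h).symm

noncomputable def colimitLeg (j : J) : F.obj j ⟶ jointCoimage (freeHomOfCocone F) where
  f := colimitLegMap F j
  h := jointCoimage_ext _ fun c => by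
    have hc := (jointCoimageLift (freeHomOfCocone F) c).h
    rw [Category.assoc, ← hc, ← T.map_comp_assoc, colimitLegMap_comp_jointCoimageLift,
      Category.assoc, colimitLegMap_comp_jointCoimageLift]
    exact (c.ι.app j).h

lemma colimitLeg_comp_jointCoimageLift (j : J) (c : Cocone F) :
    colimitLeg F j ≫ jointCoimageLift (freeHomOfCocone F) c = c.ι.app j :=
  Hom.ext (colimitLegMap_comp_jointCoimageLift F j c)

noncomputable def colimitCocone : Cocone F where
  pt := jointCoimage (freeHomOfCocone F)
  ι.app := colimitLeg F
  ι.naturality j j' φ := jointCoimage_hom_ext _ fun c => by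
    simp [colimitLeg_comp_jointCoimageLift]

noncomputable def colimitCoconeIsColimit : IsColimit (colimitCocone F) where
  desc c := jointCoimageLift (freeHomOfCocone F) c
  fac c j := colimitLeg_comp_jointCoimageLift F j c
  uniq c m hm := (cancel_epi (toJointCoimage (freeHomOfCocone F))).1 <| by
    rw [toJointCoimage_jointCoimageLift, freeHomOfCocone, Equiv.eq_symm_apply]
    ext ⟨j, x⟩
    exact ConcreteCategory.congr_hom (congrArg Hom.f (hm j)) x

instance : HasColimits T.Algebra where
  has_colimits_of_shape _ _ :=
    { has_colimit := fun F => ⟨⟨⟨colimitCocone F, colimitCoconeIsColimit F⟩⟩⟩ }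

end Colimits

end CategoryTheory.Monad.Algebra

namespace CategoryTheory

noncomputable def Adjunction.coyonedaObjPUnitIso {D : Type u} [Category.{v} D]
    {F : Type v ⥤ D} {G : D ⥤ Type v} (adj : F ⊣ G) :
    coyoneda.obj (Opposite.op (F.obj PUnit)) ≅ G :=
  Functor.corepresentableByEquiv (adj.corepresentableBy PUnit) ≪≫
    Functor.isoWhiskerLeft G Coyoneda.punitIso ≪≫ G.rightUnitor

lemma Functor.isSplitPair_of_iso {C D : Type*} [Category C] [Category D] {F F' : C ⥤ D}
    (φ : F ≅ F') {A B : C} (f g : A ⟶ B) [F.IsSplitPair f g] : F'.IsSplitPair f g := by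
  obtain ⟨Z, π, ⟨t⟩⟩ := HasSplitCoequalizer.splittable (f := F.map f) (g := F.map g)
  refine ⟨Z, φ.inv.app B ≫ π, ⟨
    { rightSection := t.rightSection ≫ φ.hom.app B
      leftSection := φ.inv.app B ≫ t.leftSection ≫ φ.hom.app A
      condition := by rw [φ.inv.naturality_assoc, φ.inv.naturality_assoc, t.condition]
      leftSection_bottom := by
        simp only [Category.assoc, ← φ.hom.naturality, t.leftSection_bottom_assoc,
          Iso.inv_hom_id_app]
      leftSection_top := by
        simp only [Category.assoc, ← φ.hom.naturality, t.leftSection_top_assoc] }⟩⟩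

namespace Monad

variable {C D : Type*} [Category C] [Category D]

lemma preservesColimitOfIsSplitPair_of_iso {F F' : D ⥤ C} (φ : F ≅ F')
    [PreservesColimitOfIsSplitPair F] : PreservesColimitOfIsSplitPair F' where
  out f g _ :=
    have := Functor.isSplitPair_of_iso φ.symm f g
    preservesColimit_of_natIso _ φ

instance preservesColimitOfIsSplitPair_comp_forget {T : Monad C} (L : D ⥤ T.Algebra)
    [PreservesColimitsOfShape WalkingParallelPair L] :
    PreservesColimitOfIsSplitPair (L ⋙ T.forget) where
  out f g hfg :=
    have : T.forget.IsSplitPair (L.map f) (L.map g) := hfg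
    have := createsGSplitCoequalizersOfMonadic T.forget (L.map f) (L.map g)
    have := hasColimit_of_iso (F := parallelPair (T.forget.map (L.map f)) (T.forget.map (L.map g)))
      (diagramIsoParallelPair (parallelPair (L.map f) (L.map g) ⋙ T.forget))
    have : PreservesColimit (parallelPair ((parallelPair f g ⋙ L).map .left)
        ((parallelPair f g ⋙ L).map .right)) T.forget :=
      preservesColimit_of_createsColimit_and_hasColimit (parallelPair (L.map f) (L.map g)) _
    have : PreservesColimit (parallelPair f g ⋙ L) T.forget :=
      preservesColimit_of_iso_diagram _ (diagramIsoParallelPair _).symm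
    inferInstance

end Monad

end CategoryTheory

namespace Paper

section

variable {D : Set Cat.{0,0}} {K : Type u} [Category.{0} K]

lemma isStrongGenerator_singleton_iff (G : K) :
    IsStrongGenerator {G} ↔ (coyoneda.obj (op G)).ReflectsIsomorphisms := by
  have key {X Y : K} (f : X ⟶ Y) :
      IsIso ((restrictedYoneda {G}).map f) ↔ IsIso ((coyoneda.obj (op G)).map f) := by
    rw [NatTrans.isIso_iff_isIso_app]
    exact ⟨fun h => h (op ⟨G, rfl⟩), by rintro h ⟨⟨_, rfl⟩⟩; exact h⟩
  refine ⟨fun h => ⟨fun f hf => ?_⟩, fun _ => ⟨fun f hf => ?_⟩⟩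
  · have : (restrictedYoneda {G}).ReflectsIsomorphisms := h
    have := (key f).2 hf
    exact isIso_of_reflects_iso f (restrictedYoneda {G})
  · have := (key f).1 hf
    exact isIso_of_reflects_iso f (coyoneda.obj (op G))

lemma hasProjectiveDPresentableGenerator_of_coyoneda_iso [HasColimits K] {R : K ⥤ Type}
    [R.ReflectsIsomorphisms] [Monad.PreservesColimitOfIsSplitPair R]
    (hR : ∀ (C : Type) [SmallCategory C], DFiltered D C →
      Nonempty (PreservesColimitsOfShape C R))
    {G : K} (φ : coyoneda.obj (op G) ≅ R) : HasProjectiveDPresentableGenerator D K := by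
  have := Monad.preservesColimitOfIsSplitPair_of_iso φ.symm
  refine ⟨‹_›, G, (isStrongGenerator_singleton_iff G).2 (reflectsIsomorphisms_of_iso φ.symm),
    fun C _ hC => ?_, fun A B f g _ => ⟨inferInstance⟩⟩
  have := (hR C hC).some
  exact ⟨preservesColimitsOfShape_of_natIso φ.symm⟩

lemma hasProjectiveDPresentableGenerator_of_isDAryMonadic (h : IsDAryMonadic D K) :
    HasProjectiveDPresentableGenerator D K := by
  obtain ⟨T, hT, ⟨e⟩⟩ := h
  have := Adjunction.has_colimits_of_equivalence e.functor
  refine hasProjectiveDPresentableGenerator_of_coyoneda_iso (R := e.functor ⋙ T.forget)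
    (fun C _ hC => ?_)
    (T.adj.comp e.symm.toAdjunction).coyonedaObjPUnitIso
  have := (hT C hC).some
  exact ⟨inferInstance⟩

lemma isDAryMonadic_of_monadicRightAdjoint (R : K ⥤ Type) [MonadicRightAdjoint R]
    (hR : ∀ (C : Type) [SmallCategory C], DFiltered D C →
      Nonempty (PreservesColimitsOfShape C R)) : IsDAryMonadic D K := by
  refine ⟨(monadicAdjunction R).toMonad, fun C _ hC => ?_,
    ⟨(Monad.comparison (monadicAdjunction R)).asEquivalence⟩⟩
  have := (monadicAdjunction R).leftAdjoint_preservesColimits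
  have := (hR C hC).some
  exact ⟨inferInstanceAs (PreservesColimitsOfShape C (monadicLeftAdjoint R ⋙ R))⟩

lemma isDAryMonadic_of_hasProjectiveDPresentableGenerator
    (h : HasProjectiveDPresentableGenerator D K) : IsDAryMonadic D K := by
  obtain ⟨_, G, hG, hGpres, hGproj⟩ := h
  have := (isStrongGenerator_singleton_iff G).1 hG
  have : Monad.HasCoequalizerOfIsSplitPair (coyoneda.obj (op G)) := ⟨fun _ _ => inferInstance⟩
  have : Monad.PreservesColimitOfIsSplitPair (coyoneda.obj (op G)) :=
    ⟨fun f g hfg => (hGproj _ _ f g hfg).some⟩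
  have := Monad.monadicOfHasPreservesGSplitCoequalizersOfReflectsIsomorphisms (sigmaConstAdj G)
  exact isDAryMonadic_of_monadicRightAdjoint (coyoneda.obj (op G)) hGpres

lemma locallyDPresentable_of_hasProjectiveDPresentableGenerator
    (h : HasProjectiveDPresentableGenerator D K) : LocallyDPresentable D K := by
  obtain ⟨hK, G, hG, hGpres, -⟩ := h
  exact ⟨hK, {G}, small_single G, by rintro X rfl; exact hGpres, hG⟩

end

theorem monadic_characterization_general (D : Set Cat.{0,0})
    (K : Type u) [Category.{0} K] :
    (IsDAryMonadic D K ↔ HasProjectiveDPresentableGenerator D K) ∧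
    (IsDAryMonadic D K → LocallyDPresentable D K) :=
  ⟨⟨hasProjectiveDPresentableGenerator_of_isDAryMonadic,
      isDAryMonadic_of_hasProjectiveDPresentableGenerator⟩,
    fun h => locallyDPresentable_of_hasProjectiveDPresentableGenerator
      (hasProjectiveDPresentableGenerator_of_isDAryMonadic h)⟩

/-- For a weakly sound class `D`, a category `K` is equivalent to the
category of algebras of a monad on `Type` preserving colimits of all `D`-filtered shapes
iff `K` is cocomplete with a `D`-presentable projective strong generator; moreover in that
case `K` is locally `D`-presentable. -/
theorem monadic_characterization (D : Set Cat.{0,0}) (hD : WeaklySound D)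
    (K : Type u) [Category.{0} K] :
    (IsDAryMonadic D K ↔ HasProjectiveDPresentableGenerator D K) ∧
    (IsDAryMonadic D K → LocallyDPresentable D K) :=
  monadic_characterization_general D K

end Paper
end
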